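/- Let A and B be unital C*-algebras, φ : A → B a positive unital linear map, and f a convex function on an open interval I. If a ∈ A is self-adjoint with spectrum contained in I, and the elements φ(a) and φ(f(a)) commute in B, then f(φ(a)) ≤ φ(f(a)). -/
import Mathlib

open scoped ComplexOrder

/-- Supporting (tangent) line for a convex function on an open set in `ℝ`. -/
lemma exists_tangent_line' {I : Set ℝ} (hI : IsOpen I) {f : ℝ → ℝ} (hf : ConvexOn ℝ I f)
    {x₀ : ℝ} (hx₀ : x₀ ∈ I) : ∃ k : ℝ, ∀ t ∈ I, f x₀ + k * (t - x₀) ≤ f t := by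
  obtain ⟨ε, hε, hball⟩ := Metric.isOpen_iff.mp hI x₀ hx₀
  have hu : x₀ - ε / 2 ∈ I := by
    apply hball
    rw [Metric.mem_ball, Real.dist_eq]
    rw [show x₀ - ε/2 - x₀ = -(ε/2) by ring, abs_neg, abs_of_nonneg (by linarith)]
    linarith
  have hv : x₀ + ε / 2 ∈ I := by
    apply hball
    rw [Metric.mem_ball, Real.dist_eq]
    rw [show x₀ + ε/2 - x₀ = ε/2 by ring, abs_of_nonneg (by linarith)]
    linarith
  set L : Set ℝ := {s : ℝ | ∃ y ∈ I, y < x₀ ∧ s = (f x₀ - f y) / (x₀ - y)} with hL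
  have hne : L.Nonempty := ⟨_, x₀ - ε/2, hu, by linarith, rfl⟩
  have hbdd : BddAbove L := by
    refine ⟨(f (x₀ + ε/2) - f x₀) / (x₀ + ε/2 - x₀), ?_⟩
    rintro s ⟨y, hy, hylt, rfl⟩
    exact hf.slope_mono_adjacent hy hv hylt (by linarith)
  refine ⟨sSup L, fun t ht => ?_⟩
  rcases lt_trichotomy t x₀ with h | h | h
  · have hmem : (f x₀ - f t) / (x₀ - t) ∈ L := ⟨t, ht, h, rfl⟩
    have h1 : (f x₀ - f t) / (x₀ - t) ≤ sSup L := le_csSup hbdd hmem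
    have h2 : f x₀ - f t ≤ sSup L * (x₀ - t) := by
      rw [div_le_iff₀ (by linarith)] at h1
      linarith
    nlinarith
  · subst h; simp
  · have h1 : sSup L ≤ (f t - f x₀) / (t - x₀) := by
      apply csSup_le hne
      rintro s ⟨y, hy, hylt, rfl⟩
      exact hf.slope_mono_adjacent hy ht hylt h
    have h2 : sSup L * (t - x₀) ≤ f t - f x₀ := by
      rw [le_div_iff₀ (by linarith)] at h1
      linarith
    linarith

theorem cfc_le_of_forall_tangent {B : Type*} [CStarAlgebra B] [PartialOrder B] [StarOrderedRing B]
    {b c : B} (hb : IsSelfAdjoint b) (hc : IsSelfAdjoint c) (hbc : Commute b c)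
    {f : ℝ → ℝ} (hf : ContinuousOn f (spectrum ℝ b))
    (h : ∀ x₀ ∈ spectrum ℝ b, ∃ α k : ℝ, α + k * x₀ = f x₀ ∧ algebraMap ℝ B α + k • b ≤ c) :
    cfc f b ≤ c := by
  have hcomm : ∀ x ∈ ({b, c} : Set B), ∀ y ∈ ({b, c} : Set B), x * y = y * x := by
    rintro x (rfl | rfl) y (rfl | rfl)
    · rfl
    · exact hbc
    · exact hbc.symm
    · rfl
  have hcomm_star : ∀ x ∈ ({b, c} : Set B), ∀ y ∈ ({b, c} : Set B),
      x * star y = star y * x := by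
    rintro x hx y hy
    have hsy : star y = y := by rcases hy with rfl | rfl; exacts [hb, hc]
    rw [hsy]
    exact hcomm x hx y hy
  letI : CommSemiring (StarAlgebra.adjoin ℂ ({b, c} : Set B)) :=
    StarAlgebra.adjoinCommSemiringOfComm ℂ hcomm hcomm_star
  haveI hSclosed : IsClosed (((StarAlgebra.adjoin ℂ ({b, c} : Set B)).topologicalClosure :
      StarSubalgebra ℂ B) : Set B) :=
    StarSubalgebra.isClosed_topologicalClosure _
  set S : StarSubalgebra ℂ B := (StarAlgebra.adjoin ℂ ({b, c} : Set B)).topologicalClosure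
    with hSdef
  letI : CommSemiring S :=
    StarSubalgebra.commSemiringTopologicalClosure _ (fun x y => mul_comm x y)
  letI : CStarAlgebra S := StarSubalgebra.cstarAlgebra S
  letI : NormedCommRing S := { (inferInstance : NormedRing S) with
    mul_comm := fun x y => mul_comm x y }
  -- lift b and c to S
  have hbS : b ∈ S := (StarSubalgebra.le_topologicalClosure _)
    (StarAlgebra.subset_adjoin ℂ _ (by simp))
  have hcS : c ∈ S := (StarSubalgebra.le_topologicalClosure _)
    (StarAlgebra.subset_adjoin ℂ _ (by simp))
  set b' : S := ⟨b, hbS⟩ with hb'def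
  set c' : S := ⟨c, hcS⟩ with hc'def
  have hb' : IsSelfAdjoint b' := Subtype.ext (by simpa using hb.star_eq)
  -- spectra agree
  have hspecC : spectrum ℂ b' = spectrum ℂ b := StarSubalgebra.spectrum_eq S
  have hpre1 : spectrum ℝ b' = algebraMap ℝ ℂ ⁻¹' spectrum ℂ b' :=
    (spectrum.preimage_algebraMap ℂ).symm
  have hpre2 : spectrum ℝ b = algebraMap ℝ ℂ ⁻¹' spectrum ℂ b :=
    (spectrum.preimage_algebraMap ℂ).symm
  have hspecR : spectrum ℝ b' = spectrum ℝ b := by rw [hpre1, hpre2, hspecC]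
  have hfb' : ContinuousOn f (spectrum ℝ b') := hspecR ▸ hf
  -- the coercion of `cfc f b'` is `cfc f b`
  have hcfc_coe : ((cfc f b' : S) : B) = cfc f b := by
    have := StarAlgHom.map_cfc (S.subtype) f b' hfb' (by exact continuous_subtype_val) hb' hb
    simpa using this
  -- reduce to spectrum condition
  rw [← sub_nonneg]
  have hfb_sa : IsSelfAdjoint (cfc f b) := cfc_predicate f b
  have hsa : IsSelfAdjoint (c - cfc f b) := hc.sub hfb_sa
  rw [StarOrderedRing.nonneg_iff_spectrum_nonneg (R := ℝ) _ hsa]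
  intro x hx
  -- pass to the complex spectrum computed in S
  set d' : S := c' - cfc f b' with hd'def
  have hd_coe : ((d' : S) : B) = c - cfc f b := by
    rw [hd'def]
    push_cast [hcfc_coe]
    rfl
  have hxC : (x : ℂ) ∈ spectrum ℂ d' := by
    rw [StarSubalgebra.spectrum_eq S, hd_coe]
    have : spectrum ℝ (c - cfc f b) = algebraMap ℝ ℂ ⁻¹' spectrum ℂ (c - cfc f b) :=
      (spectrum.preimage_algebraMap ℂ).symm
    rw [this] at hx
    exact hx
  obtain ⟨ω, hω⟩ := WeakDual.CharacterSpace.mem_spectrum_iff_exists.mp hxC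
  -- `ω b'` is a real element of the spectrum of b
  have hωb_mem : ω b' ∈ spectrum ℂ b := hspecC ▸ AlgHom.apply_mem_spectrum ω b'
  have hωb_real : ω b' = ((ω b').re : ℂ) := hb.mem_spectrum_eq_re hωb_mem
  set x₀ : ℝ := (ω b').re with hx₀def
  have hx₀ : x₀ ∈ spectrum ℝ b := by
    rw [hpre2]
    show algebraMap ℝ ℂ x₀ ∈ spectrum ℂ b
    simpa [← hωb_real] using hωb_mem
  obtain ⟨α, k, hαk, hle⟩ := h x₀ hx₀
  -- the element y is nonnegative in B, so ω y is a nonnegative complex number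
  set y : S := c' - (algebraMap ℝ S α + k • b') with hydef
  have hy_coe : ((y : S) : B) = c - (algebraMap ℝ B α + k • b) := by
    rw [hydef]
    push_cast
    rw [IsScalarTower.algebraMap_apply ℝ ℂ S, IsScalarTower.algebraMap_apply ℝ ℂ B]
    rfl
  have hy_pos : (0 : B) ≤ ((y : S) : B) := by
    rw [hy_coe, sub_nonneg]
    exact hle
  have hωy_nonneg : (0 : ℂ) ≤ ω y := by
    have hymem : ω y ∈ spectrum ℂ ((y : S) : B) := by
      rw [← StarSubalgebra.spectrum_eq S]
      exact AlgHom.apply_mem_spectrum ω y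
    exact spectrum_nonneg_of_nonneg hy_pos hymem
  -- compute ω y and ω d'
  have hωb' : ω b' = algebraMap ℝ ℂ x₀ := by simpa using hωb_real
  have hωalg : ω (algebraMap ℝ S α) = (α : ℂ) := by
    rw [IsScalarTower.algebraMap_apply ℝ ℂ S, AlgHomClass.commutes]
    simp
  have hωsmul : ω (k • b') = (k : ℂ) * ω b' := by
    rw [← algebraMap_smul ℂ k b', map_smul, smul_eq_mul]
    simp
  have hωb_sa : IsSelfAdjoint (ω b') := by
    rw [hωb_real]
    show star ((x₀ : ℝ) : ℂ) = ((x₀ : ℝ) : ℂ)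
    exact Complex.conj_ofReal x₀
  have hωcfc : ω (cfc f b') = ((f x₀ : ℝ) : ℂ) := by
    rw [StarAlgHomClass.map_cfc (S := ℂ) ω f b' hfb' (map_continuous ω) hb' hωb_sa, hωb',
      cfc_algebraMap]
    simp
  have hωy_val : ω y = ω c' - (f x₀ : ℂ) := by
    rw [hydef, map_sub, map_add, hωalg, hωsmul, hωb']
    have : (α : ℂ) + (k : ℂ) * (x₀ : ℂ) = ((f x₀ : ℝ) : ℂ) := by
      rw [← hαk]; push_cast; ring
    simp only [Complex.coe_algebraMap] at *
    rw [this]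
  have hωd_val : ω d' = ω c' - (f x₀ : ℂ) := by
    rw [hd'def, map_sub, hωcfc]
  have : (0 : ℂ) ≤ (x : ℂ) := by
    rw [← hω, hωd_val, ← hωy_val]
    exact hωy_nonneg
  exact_mod_cast this

/-- Jensen's inequality for a positive unital map `φ : A → B` between unital C*-algebras
and a convex function `f` on an open interval `I`, under the assumption that `φ(a)` and
`φ(f(a))` commute: `f(φ(a)) ≤ φ(f(a))`. -/
theorem jensen_of_commute {A B : Type*} [CStarAlgebra A] [PartialOrder A] [StarOrderedRing A]
    [CStarAlgebra B] [PartialOrder B] [StarOrderedRing B]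
    (φ : A →ₗ[ℂ] B) (hφ_pos : ∀ x : A, 0 ≤ x → 0 ≤ φ x) (hφ_unital : φ 1 = 1)
    (I : Set ℝ) (hI_open : IsOpen I) (hI_conn : I.OrdConnected)
    (f : ℝ → ℝ) (hf : ConvexOn ℝ I f)
    (a : A) (ha : IsSelfAdjoint a) (hspec : spectrum ℝ a ⊆ I)
    (hcomm : Commute (φ a) (φ (cfc f a))) :
    cfc f (φ a) ≤ φ (cfc f a) := by
  obtain hB | hB := subsingleton_or_nontrivial B
  · exact le_of_eq (Subsingleton.elim _ _)
  haveI : Nontrivial A := by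
    refine ⟨1, 0, fun h01 => ?_⟩
    have : (1 : B) = 0 := by rw [← hφ_unital, h01, map_zero]
    exact one_ne_zero this
  -- basic properties of φ
  have hmono : ∀ {x y : A}, x ≤ y → φ x ≤ φ y := by
    intro x y hxy
    have := hφ_pos (y - x) (sub_nonneg.mpr hxy)
    rw [map_sub] at this
    exact sub_nonneg.mp this
  have hφ_sa : ∀ x : A, IsSelfAdjoint x → IsSelfAdjoint (φ x) := by
    intro x hx
    have hdecomp : x = x⁺ - x⁻ := (CFC.posPart_sub_negPart x hx).symm
    rw [hdecomp, map_sub]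
    exact ((hφ_pos _ (CFC.posPart_nonneg x)).isSelfAdjoint).sub
      ((hφ_pos _ (CFC.negPart_nonneg x)).isSelfAdjoint)
  have hφ_alg : ∀ r : ℝ, φ (algebraMap ℝ A r) = algebraMap ℝ B r := by
    intro r
    rw [IsScalarTower.algebraMap_apply ℝ ℂ A, IsScalarTower.algebraMap_apply ℝ ℂ B,
      Algebra.algebraMap_eq_smul_one, Algebra.algebraMap_eq_smul_one (A := B), map_smul,
      hφ_unital]
  have hb : IsSelfAdjoint (φ a) := hφ_sa a ha
  have hfa_sa : IsSelfAdjoint (cfc f a) := cfc_predicate f a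
  have hc : IsSelfAdjoint (φ (cfc f a)) := hφ_sa _ hfa_sa
  have hfI : ContinuousOn f I := hf.continuousOn hI_open
  -- bounds on the spectrum of a
  have hspec_ne : (spectrum ℝ a).Nonempty := ha.spectrum_nonempty
  have hcpt : IsCompact (spectrum ℝ a) := isCompact_iff_compactSpace.mpr inferInstance
  set m := sInf (spectrum ℝ a) with hm
  set M := sSup (spectrum ℝ a) with hM
  have hmem_m : m ∈ spectrum ℝ a := hcpt.sInf_mem hspec_ne
  have hmem_M : M ∈ spectrum ℝ a := hcpt.sSup_mem hspec_ne
  have hIcc : Set.Icc m M ⊆ I := hI_conn.out (hspec hmem_m) (hspec hmem_M)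
  -- the spectrum of φ a lies in [m, M]
  have hb_le : φ a ≤ algebraMap ℝ B M := by
    have h1 : a ≤ algebraMap ℝ A M := by
      have := cfc_mono (f := id) (g := fun _ : ℝ => M) (a := a)
        (fun x hx => le_csSup hcpt.bddAbove hx) (by fun_prop) (by fun_prop)
      rwa [cfc_id ℝ a, cfc_const M a] at this
    calc φ a ≤ φ (algebraMap ℝ A M) := hmono h1
      _ = algebraMap ℝ B M := hφ_alg M
  have hle_b : algebraMap ℝ B m ≤ φ a := by
    have h1 : algebraMap ℝ A m ≤ a := by
      have := cfc_mono (f := fun _ : ℝ => m) (g := id) (a := a)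
        (fun x hx => csInf_le hcpt.bddBelow hx) (by fun_prop) (by fun_prop)
      rwa [cfc_id ℝ a, cfc_const m a] at this
    calc algebraMap ℝ B m = φ (algebraMap ℝ A m) := (hφ_alg m).symm
      _ ≤ φ a := hmono h1
  have hspec_b : spectrum ℝ (φ a) ⊆ Set.Icc m M := by
    intro x hx
    constructor
    · have h0 : (0 : B) ≤ φ a - algebraMap ℝ B m := sub_nonneg.mpr hle_b
      have hxm : x - m ∈ spectrum ℝ (φ a - algebraMap ℝ B m) := by
        rw [← spectrum.sub_singleton_eq]
        exact Set.sub_mem_sub hx rfl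
      linarith [spectrum_nonneg_of_nonneg h0 hxm]
    · have h0 : (0 : B) ≤ algebraMap ℝ B M - φ a := sub_nonneg.mpr hb_le
      have hxM : M - x ∈ spectrum ℝ (algebraMap ℝ B M - φ a) := by
        rw [← spectrum.singleton_sub_eq]
        exact Set.sub_mem_sub rfl hx
      linarith [spectrum_nonneg_of_nonneg h0 hxM]
  have hspec_bI : spectrum ℝ (φ a) ⊆ I := hspec_b.trans hIcc
  -- apply the key lemma
  refine cfc_le_of_forall_tangent hb hc hcomm (hfI.mono hspec_bI) ?_
  intro x₀ hx₀
  obtain ⟨k, htan⟩ := exists_tangent_line' hI_open hf (hspec_bI hx₀)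
  refine ⟨f x₀ - k * x₀, k, by ring, ?_⟩
  -- the affine minorant in A
  have hga : cfc (fun t : ℝ => (f x₀ - k * x₀) + k * t) a ≤ cfc f a := by
    refine cfc_mono (fun t ht => ?_) (by fun_prop) (hfI.mono hspec)
    have := htan t (hspec ht)
    linarith
  have hcalc : cfc (fun t : ℝ => (f x₀ - k * x₀) + k * t) a
      = algebraMap ℝ A (f x₀ - k * x₀) + k • a := by
    rw [cfc_const_add (f x₀ - k * x₀) (fun t : ℝ => k * t) a (by fun_prop) ha,
      cfc_const_mul_id k a ha]
  have hsmul : φ (k • a) = k • φ a := by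
    rw [← algebraMap_smul ℂ k a, map_smul, algebraMap_smul]
  have := hmono (hcalc ▸ hga)
  rw [map_add, hφ_alg, hsmul] at this
  exact this
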